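/- Let k be a commutative ring, A a perfect k-algebra, S a commutative k-algebra, and M an (A⊗_k S, S)-dimodule. Then σ(d)(a ⊗ s) = d(s)(a ⊗ 1) defines a well-defined k-linear map σ : Der_k(S, Cent_k(A⊗_k S, M)) → Der_k(A⊗_k S, M) which is a section of η_{A⊗S,M} (i.e., η_{A⊗S,M} ∘ σ = id); consequently there is a direct sum decomposition Der_k(A⊗_k S, M) ≅ Der_S(A⊗_k S, M) ⊕ Der_k(S, Cent_k(A⊗_k S, M)). -/

import Mathlib

/-- The `k`-submodule `Der_k(B,N)` of `Hom_k(B,N)`: `k`-linear derivations of the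
`R`-algebra `B` (multiplication `mulB`) with values in the `(B,R)`-dimodule `N`. -/
def derkSubmodule {k R B N : Type*} [CommRing k] [CommRing R] [Algebra k R]
    [AddCommGroup B] [Module k B] [Module R B] [IsScalarTower k R B]
    [AddCommGroup N] [Module k N] [Module R N] [IsScalarTower k R N]
    (mulB : B →ₗ[R] B →ₗ[R] B)
    (lactN : B →ₗ[R] N →ₗ[R] N) (ractN : N →ₗ[R] B →ₗ[R] N) :
    Submodule k (B →ₗ[k] N) where
  carrier := {d | ∀ b₁ b₂ : B, d (mulB b₁ b₂) = ractN (d b₁) b₂ + lactN b₁ (d b₂)}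
  add_mem' := by
    intro f g hf hg b₁ b₂
    simp only [LinearMap.add_apply, hf b₁ b₂, hg b₁ b₂, map_add, LinearMap.add_apply]
    abel
  zero_mem' := by intro b₁ b₂; simp
  smul_mem' := by
    intro c f hf b₁ b₂
    simp only [LinearMap.smul_apply, hf b₁ b₂, smul_add,
      LinearMap.map_smul_of_tower, LinearMap.smul_apply]

/-- The `k`-submodule `Der_k(R, Cent_k(B,N))` of `Hom_k(R, Hom_k(B,N))`: `k`-linear
maps `D` on `R` whose values are centroidal transformations and which satisfy the
Leibniz rule `D(r₁r₂) = D(r₁)·r₂ + r₁·D(r₂)` for the `R`-bimodule structure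
`(r·χ)(b) = r • χ(b)`, `(χ·r)(b) = χ(r • b)` of the centroid. -/
def derRCentSubmodule {k R B N : Type*} [CommRing k] [CommRing R] [Algebra k R]
    [AddCommGroup B] [Module k B] [Module R B] [IsScalarTower k R B]
    [AddCommGroup N] [Module k N] [Module R N] [IsScalarTower k R N]
    (mulB : B →ₗ[R] B →ₗ[R] B)
    (lactN : B →ₗ[R] N →ₗ[R] N) (ractN : N →ₗ[R] B →ₗ[R] N) :
    Submodule k (R →ₗ[k] (B →ₗ[k] N)) where
  carrier := {D |
    (∀ (r : R) (b₁ b₂ : B),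
      D r (mulB b₁ b₂) = ractN (D r b₁) b₂ ∧ D r (mulB b₁ b₂) = lactN b₁ (D r b₂)) ∧
    (∀ (r₁ r₂ : R) (b : B),
      D (r₁ * r₂) b = D r₁ (r₂ • b) + r₁ • D r₂ b)}
  add_mem' := by
    intro f g hf hg
    refine ⟨fun r b₁ b₂ => ?_, fun r₁ r₂ b => ?_⟩
    · constructor
      · simp only [LinearMap.add_apply, (hf.1 r b₁ b₂).1, (hg.1 r b₁ b₂).1, map_add,
          LinearMap.add_apply]
      · simp only [LinearMap.add_apply, (hf.1 r b₁ b₂).2, (hg.1 r b₁ b₂).2, map_add]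
    · simp only [LinearMap.add_apply, hf.2 r₁ r₂ b, hg.2 r₁ r₂ b, smul_add]
      abel
  zero_mem' := by
    refine ⟨fun r b₁ b₂ => ?_, fun r₁ r₂ b => ?_⟩ <;> simp
  smul_mem' := by
    intro c f hf
    refine ⟨fun r b₁ b₂ => ?_, fun r₁ r₂ b => ?_⟩
    · constructor
      · simp only [LinearMap.smul_apply, (hf.1 r b₁ b₂).1,
          LinearMap.map_smul_of_tower, LinearMap.smul_apply]
      · simp only [LinearMap.smul_apply, (hf.1 r b₁ b₂).2, LinearMap.map_smul_of_tower]
    · simp only [LinearMap.smul_apply, hf.2 r₁ r₂ b, smul_add, smul_comm c r₁]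

open TensorProduct

/-!
The section `σ` is the `k`-linear extension of `s ⊗ a ↦ D(s)(1 ⊗ a)`; it is well defined because
`D` is `k`-linear in `s`. Writing `s ⊗ a = s • (1 ⊗ a)`, the Leibniz rule for `D` gives
`η (σ D) = D`, and centrality of the values `D(s)` makes `σ D` a derivation. Since `η d = 0`
exactly when `d` is `S`-linear, every derivation splits uniquely as
`d = (d - σ (η d)) + σ (η d)`.
-/

section Eta

variable {k R B N : Type*} [CommRing k] [CommRing R] [Algebra k R]
    [AddCommGroup B] [Module k B] [Module R B] [IsScalarTower k R B]
    [AddCommGroup N] [Module k N] [Module R N] [IsScalarTower k R N]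

variable (k R B N) in
def eta : (B →ₗ[k] N) →ₗ[k] R →ₗ[k] B →ₗ[k] N :=
  LinearMap.mk₂ k (fun d r => d ∘ₗ DistribSMul.toLinearMap k B r - r • d)
    (fun d₁ d₂ r => by ext x; simp; abel)
    (fun c d r => by ext x; simp [smul_sub, smul_comm r c])
    (fun d r₁ r₂ => by ext x; simp [add_smul]; abel)
    (fun c d r => by ext x; simp [smul_sub, smul_assoc])

theorem eta_apply (d : B →ₗ[k] N) (r : R) (x : B) :
    eta k R B N d r x = d (r • x) - r • d x :=
  rfl

theorem eta_eq_zero_iff {d : B →ₗ[k] N} :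
    eta k R B N d = 0 ↔ ∀ (r : R) (x : B), d (r • x) = r • d x := by
  simp only [LinearMap.ext_iff, eta_apply, LinearMap.zero_apply, sub_eq_zero]

theorem eta_mem_derRCentSubmodule {mulB : B →ₗ[R] B →ₗ[R] B}
    {lactN : B →ₗ[R] N →ₗ[R] N} {ractN : N →ₗ[R] B →ₗ[R] N} {d : B →ₗ[k] N}
    (hd : d ∈ derkSubmodule mulB lactN ractN) :
    eta k R B N d ∈ derRCentSubmodule mulB lactN ractN := by
  refine ⟨fun r b₁ b₂ => ⟨?_, ?_⟩, fun r₁ r₂ b => ?_⟩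
  · rw [eta_apply, eta_apply, ← LinearMap.map_smul₂, hd, hd]
    simp only [map_sub, LinearMap.sub_apply, LinearMap.map_smul₂, smul_add]
    abel
  · rw [eta_apply, eta_apply, ← map_smul, hd, hd]
    simp only [map_sub, map_smul, smul_add]
    abel
  · simp only [eta_apply, mul_smul, smul_sub]
    abel

end Eta

section Sigma

variable {k A S M : Type*} [CommRing k] [AddCommGroup A] [Module k A] [CommRing S]
    [Algebra k S] [AddCommGroup M] [Module k M]

variable (k A S M) in
def sigma : (S →ₗ[k] S ⊗[k] A →ₗ[k] M) →ₗ[k] S ⊗[k] A →ₗ[k] M :=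
  uncurry (RingHom.id k) S A M ∘ₗ
    LinearMap.llcomp k S _ _ ((LinearMap.llcomp k A (S ⊗[k] A) M).flip (mk k S A 1))

@[simp]
theorem sigma_tmul (D : S →ₗ[k] S ⊗[k] A →ₗ[k] M) (s : S) (a : A) :
    sigma k A S M D (s ⊗ₜ a) = D s (1 ⊗ₜ a) :=
  rfl

variable [Module S M] [IsScalarTower k S M]

theorem eta_sigma {D : S →ₗ[k] S ⊗[k] A →ₗ[k] M}
    (hD : ∀ (s₁ s₂ : S) (x : S ⊗[k] A), D (s₁ * s₂) x = D s₁ (s₂ • x) + s₁ • D s₂ x) :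
    eta k S (S ⊗[k] A) M (sigma k A S M D) = D := by
  ext s : 1
  apply TensorProduct.ext'
  intro t a
  rw [eta_apply, smul_tmul', smul_eq_mul, sigma_tmul, sigma_tmul, hD, ← tmul_eq_smul_one_tmul,
    add_sub_cancel_right]

theorem sigma_mem_derkSubmodule {mul : A →ₗ[k] A →ₗ[k] A}
    {mulS : S ⊗[k] A →ₗ[S] S ⊗[k] A →ₗ[S] S ⊗[k] A}
    (hmulS : ∀ (s₁ s₂ : S) (a₁ a₂ : A),
      mulS (s₁ ⊗ₜ a₁) (s₂ ⊗ₜ a₂) = (s₁ * s₂) ⊗ₜ (mul a₁ a₂))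
    {lact : S ⊗[k] A →ₗ[S] M →ₗ[S] M} {ract : M →ₗ[S] S ⊗[k] A →ₗ[S] M}
    {D : S →ₗ[k] S ⊗[k] A →ₗ[k] M} (hD : D ∈ derRCentSubmodule mulS lact ract) :
    sigma k A S M D ∈ derkSubmodule mulS lact ract := by
  obtain ⟨hcent, hleib⟩ := hD
  intro x y
  induction x using TensorProduct.induction_on with
  | zero => simp
  | add x₁ x₂ h₁ h₂ => simp only [map_add, LinearMap.add_apply, h₁, h₂]; abel
  | tmul s₁ a₁ =>
    induction y using TensorProduct.induction_on with
    | zero => simp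
    | add y₁ y₂ h₁ h₂ => simp only [map_add, h₁, h₂]; abel
    | tmul s₂ a₂ =>
      have hmul₁ : s₂ • (1 : S) ⊗ₜ[k] mul a₁ a₂ = mulS (1 ⊗ₜ a₁) (s₂ ⊗ₜ a₂) := by
        rw [hmulS, one_mul, ← tmul_eq_smul_one_tmul]
      have hmul₂ : (1 : S) ⊗ₜ[k] mul a₁ a₂ = mulS (1 ⊗ₜ a₁) (1 ⊗ₜ a₂) := by rw [hmulS, one_mul]
      have hlact : lact (s₁ ⊗ₜ a₁) = s₁ • lact (1 ⊗ₜ a₁) := by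
        rw [tmul_eq_smul_one_tmul s₁ a₁, map_smul]
      rw [hmulS, sigma_tmul, hleib, hmul₁, (hcent s₁ _ _).1, hmul₂, (hcent s₂ _ _).2, hlact]
      rfl

end Sigma

theorem stmt_11_general {k A S M : Type*} [CommRing k]
    [AddCommGroup A] [Module k A]
    [CommRing S] [Algebra k S]
    [AddCommGroup M] [Module k M] [Module S M] [IsScalarTower k S M]
    (mul : A →ₗ[k] A →ₗ[k] A)
    (mulS : (S ⊗[k] A) →ₗ[S] (S ⊗[k] A) →ₗ[S] (S ⊗[k] A))
    (hmulS : ∀ (s₁ s₂ : S) (a₁ a₂ : A),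
      mulS (s₁ ⊗ₜ a₁) (s₂ ⊗ₜ a₂) = (s₁ * s₂) ⊗ₜ (mul a₁ a₂))
    (lact : (S ⊗[k] A) →ₗ[S] M →ₗ[S] M) (ract : M →ₗ[S] (S ⊗[k] A) →ₗ[S] M) :
    ∃ σ : ↥(derRCentSubmodule (k := k) mulS lact ract) →ₗ[k] ((S ⊗[k] A) →ₗ[k] M),
      (∀ (D : ↥(derRCentSubmodule (k := k) mulS lact ract)) (s : S) (a : A),
        σ D (s ⊗ₜ a) = D.1 s ((1 : S) ⊗ₜ a)) ∧
      (∀ D, σ D ∈ derkSubmodule (k := k) mulS lact ract) ∧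
      (∀ (D : ↥(derRCentSubmodule (k := k) mulS lact ract)) (s : S) (x : S ⊗[k] A),
        σ D (s • x) - s • σ D x = D.1 s x) ∧
      (∀ d : (S ⊗[k] A) →ₗ[k] M, d ∈ derkSubmodule (k := k) mulS lact ract →
        ∃! p : ((S ⊗[k] A) →ₗ[k] M) × ↥(derRCentSubmodule (k := k) mulS lact ract),
          p.1 ∈ derkSubmodule (k := k) mulS lact ract ∧
          (∀ (s : S) (x : S ⊗[k] A), p.1 (s • x) = s • p.1 x) ∧
          d = p.1 + σ p.2) := by
  let σ := (sigma k A S M).domRestrict (derRCentSubmodule mulS lact ract)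
  have hη (D : derRCentSubmodule mulS lact ract) : eta k S _ M (σ D) = D.1 :=
    eta_sigma D.2.2
  refine ⟨σ, fun D s a => rfl, fun D => sigma_mem_derkSubmodule hmulS D.2,
    fun D s x => by rw [← eta_apply, hη], fun d hd => ?_⟩
  let D : derRCentSubmodule mulS lact ract := ⟨eta k S _ M d, eta_mem_derRCentSubmodule hd⟩
  refine ⟨(d - σ D, D), ⟨sub_mem hd (sigma_mem_derkSubmodule hmulS D.2), ?_, ?_⟩, ?_⟩
  · rw [← eta_eq_zero_iff, map_sub, hη, sub_self]
  · simp
  · rintro ⟨d₀, D'⟩ ⟨-, hd₀, hdec⟩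
    obtain rfl : D' = D := Subtype.ext <| by
      simp only [D, hdec, map_add, eta_eq_zero_iff.mpr hd₀, hη, zero_add]
    simp [hdec]

/-- Let `A` be a perfect `k`-algebra, `S` a commutative
`k`-algebra, and `M` an `(A ⊗_k S, S)`-dimodule.  Then
`σ(D)(a ⊗ s) = D(s)(a ⊗ 1)` defines a well-defined `k`-linear map
`σ : Der_k(S, Cent_k(A_S, M)) → Der_k(A_S, M)` which is a section of `η_{A_S,M}`
(i.e. `η_{A_S,M}(σ(D)) = D`); consequently every `k`-linear derivation `d` of
`A_S` with values in `M` decomposes uniquely as `d = d₀ + σ(D)` with `d₀` an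
`S`-linear derivation and `D ∈ Der_k(S, Cent_k(A_S, M))`, yielding
`Der_k(A_S, M) ≅ Der_S(A_S, M) ⊕ Der_k(S, Cent_k(A_S, M))`. -/
theorem stmt_11 {k A S M : Type*} [CommRing k]
    [AddCommGroup A] [Module k A]
    [CommRing S] [Algebra k S]
    [AddCommGroup M] [Module k M] [Module S M] [IsScalarTower k S M]
    (mul : A →ₗ[k] A →ₗ[k] A)
    (hperf : Submodule.span k {x : A | ∃ a b : A, x = mul a b} = ⊤)
    (mulS : (S ⊗[k] A) →ₗ[S] (S ⊗[k] A) →ₗ[S] (S ⊗[k] A))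
    (hmulS : ∀ (s₁ s₂ : S) (a₁ a₂ : A),
      mulS (s₁ ⊗ₜ a₁) (s₂ ⊗ₜ a₂) = (s₁ * s₂) ⊗ₜ (mul a₁ a₂))
    (lact : (S ⊗[k] A) →ₗ[S] M →ₗ[S] M) (ract : M →ₗ[S] (S ⊗[k] A) →ₗ[S] M) :
    ∃ σ : ↥(derRCentSubmodule (k := k) mulS lact ract) →ₗ[k] ((S ⊗[k] A) →ₗ[k] M),
      (∀ (D : ↥(derRCentSubmodule (k := k) mulS lact ract)) (s : S) (a : A),
        σ D (s ⊗ₜ a) = D.1 s ((1 : S) ⊗ₜ a)) ∧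
      (∀ D, σ D ∈ derkSubmodule (k := k) mulS lact ract) ∧
      (∀ (D : ↥(derRCentSubmodule (k := k) mulS lact ract)) (s : S) (x : S ⊗[k] A),
        σ D (s • x) - s • σ D x = D.1 s x) ∧
      (∀ d : (S ⊗[k] A) →ₗ[k] M, d ∈ derkSubmodule (k := k) mulS lact ract →
        ∃! p : ((S ⊗[k] A) →ₗ[k] M) × ↥(derRCentSubmodule (k := k) mulS lact ract),
          p.1 ∈ derkSubmodule (k := k) mulS lact ract ∧
          (∀ (s : S) (x : S ⊗[k] A), p.1 (s • x) = s • p.1 x) ∧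
          d = p.1 + σ p.2) :=
  stmt_11_general mul mulS hmulS lact ract
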